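/- For parameters λ, ν with 0 ≤ ν < 1 and 2√ν < λ < 1+ν, set q = √(λ²−4ν) and α = 4(λ+q)(λ+2−q)(λ−2−q)/((λ−q)(λ+2+q)(λ−2+q)), c = q/(1−ν). Then with b = 2c/(1+c²) one has the identity 2b(1+c)² − (1+b)cα ≠ 0 and the ratio −(−1+b)(−1+c)²(cα+b(−2(1+c)²+cα))² / ((1+b)(1+c)²(cα−b(2(−1+c)²+cα))²) equals 1, i.e., the conical-singularity-free condition Δψ = 2π holds. -/

import Mathlib

/-!
With `b = 2c/(1+c²)` one has `1 ± b = (1 ± c)²/(1+c²)`, and both squared factors in the ratio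
collapse to `(1 ± c)² c (α - 4)/(1+c²)`; everything then cancels as long as `c ∉ {0, ±1}` and
`α ≠ 4`. Here `0 < c < 1` because `0 < q² = λ² - 4ν < (1-ν)²`, and `α ≠ 4` because the numerator
and denominator of `α/4` are `N(q)` and `N(-q)` for `N(q) = (λ+q)((λ-q)² - 4)`, whose odd part is
`-4q(1+ν)` once `q² = λ² - 4ν`.
-/

lemma conical_numerator_eq (c α : ℝ) :
    c * α + 2 * c / (1 + c ^ 2) * (-2 * (1 + c) ^ 2 + c * α) =
      (1 + c) ^ 2 * c * (α - 4) / (1 + c ^ 2) := by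
  field_simp
  ring

lemma conical_denominator_eq (c α : ℝ) :
    c * α - 2 * c / (1 + c ^ 2) * (2 * (-1 + c) ^ 2 + c * α) =
      (1 - c) ^ 2 * c * (α - 4) / (1 + c ^ 2) := by
  field_simp
  ring

lemma one_add_two_mul_div_one_add_sq (c : ℝ) :
    1 + 2 * c / (1 + c ^ 2) = (1 + c) ^ 2 / (1 + c ^ 2) := by
  field_simp
  ring

lemma neg_one_add_two_mul_div_one_add_sq (c : ℝ) :
    -1 + 2 * c / (1 + c ^ 2) = -((1 - c) ^ 2 / (1 + c ^ 2)) := by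
  field_simp
  ring

theorem conical_ratio_eq_one {α c b : ℝ} (hc0 : c ≠ 0) (hc1 : c ≠ 1) (hc_neg_one : c ≠ -1)
    (hα : α ≠ 4) (hb : b = 2 * c / (1 + c ^ 2)) :
    2 * b * (1 + c) ^ 2 - (1 + b) * c * α ≠ 0 ∧
    (-(-1 + b) * (-1 + c) ^ 2 * (c * α + b * (-2 * (1 + c) ^ 2 + c * α)) ^ 2) /
      ((1 + b) * (1 + c) ^ 2 * (c * α - b * (2 * (-1 + c) ^ 2 + c * α)) ^ 2) = 1 := by
  have hneg : 2 * b * (1 + c) ^ 2 - (1 + b) * c * α =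
      -(c * α + b * (-2 * (1 + c) ^ 2 + c * α)) := by ring
  subst hb
  have h1c : 1 - c ≠ 0 := sub_ne_zero.mpr hc1.symm
  have h1c' : 1 + c ≠ 0 := fun h => hc_neg_one (by linarith)
  have hX : (1 + c) ^ 2 * c * (α - 4) ≠ 0 :=
    mul_ne_zero (mul_ne_zero (pow_ne_zero 2 h1c') hc0) (sub_ne_zero.mpr hα)
  constructor
  · rw [hneg, conical_numerator_eq, neg_ne_zero]
    exact div_ne_zero hX (by positivity)
  · rw [conical_numerator_eq, conical_denominator_eq, one_add_two_mul_div_one_add_sq,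
      neg_one_add_two_mul_div_one_add_sq]
    field_simp
    ring

lemma sqrt_discr_mem_Ioo {lam nu : ℝ} (hnu1 : nu < 1) (hlam1 : 2 * √nu < lam)
    (hlam2 : lam < 1 + nu) : √(lam ^ 2 - 4 * nu) ∈ Set.Ioo 0 (1 - nu) := by
  have hlam0 : 0 < lam := by linarith [Real.sqrt_nonneg nu]
  have hnu : nu < (lam / 2) ^ 2 := (Real.sqrt_lt' (by positivity)).mp (by linarith)
  constructor
  · exact Real.sqrt_pos.mpr (by linarith)
  · exact (Real.sqrt_lt' (by linarith)).mpr (by nlinarith)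

lemma four_mul_div_ne_four {lam nu q : ℝ} (hq : q ^ 2 = lam ^ 2 - 4 * nu) (hq0 : q ≠ 0)
    (hnu : 1 + nu ≠ 0) :
    4 * ((lam + q) * (lam + 2 - q) * (lam - 2 - q)) /
      ((lam - q) * (lam + 2 + q) * (lam - 2 + q)) ≠ 4 := by
  intro h
  have hD : (lam - q) * (lam + 2 + q) * (lam - 2 + q) ≠ 0 := by
    rintro hD
    rw [hD, div_zero] at h
    norm_num at h
  have hodd : (lam + q) * (lam + 2 - q) * (lam - 2 - q) -
      (lam - q) * (lam + 2 + q) * (lam - 2 + q) = -8 * q * (1 + nu) := by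
    linear_combination 2 * q * hq
  rw [div_eq_iff hD] at h
  exact mul_ne_zero (mul_ne_zero (by norm_num : (-8 : ℝ) ≠ 0) hq0) hnu (by linarith)

theorem stmt_13_general (lam nu q α c b : ℝ) (hnu1 : nu < 1)
    (hlam1 : 2 * Real.sqrt nu < lam) (hlam2 : lam < 1 + nu)
    (hq : q = Real.sqrt (lam ^ 2 - 4 * nu))
    (hα : α = 4 * ((lam + q) * (lam + 2 - q) * (lam - 2 - q)) /
        ((lam - q) * (lam + 2 + q) * (lam - 2 + q)))
    (hc : c = q / (1 - nu))
    (hb : b = 2 * c / (1 + c ^ 2)) :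
    2 * b * (1 + c) ^ 2 - (1 + b) * c * α ≠ 0 ∧
    (-(-1 + b) * (-1 + c) ^ 2 * (c * α + b * (-2 * (1 + c) ^ 2 + c * α)) ^ 2) /
      ((1 + b) * (1 + c) ^ 2 * (c * α - b * (2 * (-1 + c) ^ 2 + c * α)) ^ 2) = 1 := by
  obtain ⟨hq0, hq1⟩ := hq ▸ sqrt_discr_mem_Ioo hnu1 hlam1 hlam2
  have hsq : q ^ 2 = lam ^ 2 - 4 * nu := by
    rw [hq, Real.sq_sqrt (Real.sqrt_pos.mp (hq ▸ hq0)).le]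
  have hc0 : 0 < c := hc ▸ div_pos hq0 (by linarith)
  have hc1 : c < 1 := hc ▸ (div_lt_one (by linarith)).mpr hq1
  refine conical_ratio_eq_one hc0.ne' hc1.ne (by linarith) ?_ hb
  exact hα ▸ four_mul_div_ne_four hsq hq0.ne' (by linarith [Real.sqrt_nonneg nu])

theorem stmt_13 (lam nu q α c b : ℝ) (hnu0 : 0 ≤ nu) (hnu1 : nu < 1)
    (hlam1 : 2 * Real.sqrt nu < lam) (hlam2 : lam < 1 + nu)
    (hq : q = Real.sqrt (lam ^ 2 - 4 * nu))
    (hα : α = 4 * ((lam + q) * (lam + 2 - q) * (lam - 2 - q)) /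
        ((lam - q) * (lam + 2 + q) * (lam - 2 + q)))
    (hc : c = q / (1 - nu))
    (hb : b = 2 * c / (1 + c ^ 2)) :
    2 * b * (1 + c) ^ 2 - (1 + b) * c * α ≠ 0 ∧
    (-(-1 + b) * (-1 + c) ^ 2 * (c * α + b * (-2 * (1 + c) ^ 2 + c * α)) ^ 2) /
      ((1 + b) * (1 + c) ^ 2 * (c * α - b * (2 * (-1 + c) ^ 2 + c * α)) ^ 2) = 1 :=
  stmt_13_general lam nu q α c b hnu1 hlam1 hlam2 hq hα hc hb
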